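/- arXiv:2109.01785 — 2 statements merged into one kernel-verified Lean document; each statement's English description precedes it below -/
import Mathlib

section
/- Perturbation lemma (real positive-definite version): Let B ∈ ℝ^{n×n} be symmetric positive semidefinite, u ∈ ℝⁿ, γ ≥ 0, and z > 0. Then |(1/n) tr((B + γ u uᵀ + z I)⁻¹) - (1/n) tr((B + z I)⁻¹)| ≤ 1/(n z). -/
/-!
With `C = B + z • 1` and `w = C⁻¹ u`, the Sherman–Morrison formula gives
`tr (C + γ u uᵀ)⁻¹ - tr C⁻¹ = -γ ‖w‖² / (1 + γ ⟪u, w⟫)`. Since `u = C w` and `C ≥ z`,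
`⟪u, w⟫ = ⟪w, C w⟫ ≥ z ‖w‖²`, so this difference lies in `[-1/z, 0]`.
-/

open Matrix

namespace Matrix

variable {ι : Type*} [Fintype ι] [DecidableEq ι]

theorem inv_add_vecMulVec {K : Type*} [Field K] {C : Matrix ι ι K} (hC : IsUnit C.det)
    {u v : ι → K} (h : 1 + v ⬝ᵥ C⁻¹ *ᵥ u ≠ 0) :
    (C + vecMulVec u v)⁻¹ =
      C⁻¹ - (1 + v ⬝ᵥ C⁻¹ *ᵥ u)⁻¹ • vecMulVec (C⁻¹ *ᵥ u) (v ᵥ* C⁻¹) := by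
  refine inv_eq_right_inv ?_
  set s := v ⬝ᵥ C⁻¹ *ᵥ u
  calc (C + vecMulVec u v) * (C⁻¹ - (1 + s)⁻¹ • vecMulVec (C⁻¹ *ᵥ u) (v ᵥ* C⁻¹))
      = 1 + (1 - (1 + s)⁻¹ * (1 + s)) • vecMulVec u (v ᵥ* C⁻¹) := by
        rw [Matrix.add_mul, Matrix.mul_sub, Matrix.mul_sub, Matrix.mul_smul, Matrix.mul_smul,
          mul_nonsing_inv _ hC, mul_vecMulVec, mulVec_mulVec, mul_nonsing_inv _ hC, one_mulVec,
          vecMulVec_mul, vecMulVec_mul_vecMulVec, vecMulVec_smul]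
        module
    _ = 1 := by rw [inv_mul_cancel₀ h, sub_self, zero_smul, add_zero]

theorem trace_inv_add_vecMulVec {K : Type*} [Field K] {C : Matrix ι ι K} (hC : IsUnit C.det)
    {u v : ι → K} (h : 1 + v ⬝ᵥ C⁻¹ *ᵥ u ≠ 0) :
    (C + vecMulVec u v)⁻¹.trace =
      C⁻¹.trace - (C⁻¹ *ᵥ u) ⬝ᵥ (v ᵥ* C⁻¹) / (1 + v ⬝ᵥ C⁻¹ *ᵥ u) := by
  rw [inv_add_vecMulVec hC h, trace_sub, trace_smul, trace_vecMulVec, smul_eq_mul,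
    inv_mul_eq_div]

theorem PosDef.trace_inv_add_smul_vecMulVec_self {C : Matrix ι ι ℝ} (hC : C.PosDef)
    {γ : ℝ} (hγ : 0 ≤ γ) (u : ι → ℝ) :
    (C + γ • vecMulVec u u)⁻¹.trace =
      C⁻¹.trace - γ * (C⁻¹ *ᵥ u ⬝ᵥ C⁻¹ *ᵥ u) / (1 + γ * (u ⬝ᵥ C⁻¹ *ᵥ u)) := by
  have hsymm : u ᵥ* C⁻¹ = C⁻¹ *ᵥ u := by
    have : C⁻¹ᵀ = C⁻¹ := by simpa using hC.inv.isHermitian.eq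
    rw [← this, vecMul_transpose, this]
  have hs : 0 ≤ u ⬝ᵥ C⁻¹ *ᵥ u := by
    simpa only [star_trivial] using hC.inv.posSemidef.dotProduct_mulVec_nonneg u
  have hden : 1 + γ • u ⬝ᵥ C⁻¹ *ᵥ u ≠ 0 := by
    rw [smul_dotProduct, smul_eq_mul]; positivity
  rw [← vecMulVec_smul, trace_inv_add_vecMulVec hC.det_pos.ne'.isUnit hden, smul_vecMul, hsymm,
    dotProduct_smul, smul_dotProduct, smul_eq_mul, smul_eq_mul]

theorem PosSemidef.mul_dotProduct_self_le {B : Matrix ι ι ℝ} (hB : B.PosSemidef) (z : ℝ)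
    (x : ι → ℝ) : z * (x ⬝ᵥ x) ≤ x ⬝ᵥ (B + z • 1) *ᵥ x := by
  have hBx : 0 ≤ x ⬝ᵥ B *ᵥ x := by simpa only [star_trivial] using hB.dotProduct_mulVec_nonneg x
  rw [add_mulVec, smul_mulVec, one_mulVec, dotProduct_add, dotProduct_smul, smul_eq_mul]
  linarith

theorem PosSemidef.abs_trace_inv_add_smul_vecMulVec_sub_le {B : Matrix ι ι ℝ}
    (hB : B.PosSemidef) (u : ι → ℝ) {γ z : ℝ} (hγ : 0 ≤ γ) (hz : 0 < z) :
    |(B + γ • vecMulVec u u + z • 1)⁻¹.trace - (B + z • 1)⁻¹.trace| ≤ 1 / z := by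
  set C := B + z • (1 : Matrix ι ι ℝ)
  have hC : C.PosDef := PosDef.posSemidef_add hB (PosDef.one.smul hz)
  set w := C⁻¹ *ᵥ u
  have hCw : C *ᵥ w = u := by
    rw [mulVec_mulVec, mul_nonsing_inv _ hC.det_pos.ne'.isUnit, one_mulVec]
  have hzw : z * (w ⬝ᵥ w) ≤ u ⬝ᵥ w := by
    have := hB.mul_dotProduct_self_le z w
    rwa [hCw, dotProduct_comm w u] at this
  have hw : 0 ≤ w ⬝ᵥ w := by simpa only [star_trivial] using dotProduct_star_self_nonneg w
  have hden : 0 < 1 + γ * (u ⬝ᵥ w) := by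
    nlinarith [mul_le_mul_of_nonneg_left hzw hγ, mul_nonneg hγ (mul_nonneg hz.le hw)]
  rw [add_right_comm, hC.trace_inv_add_smul_vecMulVec_self hγ, sub_sub_cancel_left, abs_neg,
    abs_of_nonneg (by positivity), div_le_div_iff₀ hden hz]
  nlinarith

end Matrix

/-- Perturbation lemma: a rank-one perturbation changes the normalized trace of
the resolvent by at most `1/(n z)`. -/
theorem perturbation_lemma {n : ℕ}
    (B : Matrix (Fin n) (Fin n) ℝ) (u : Fin n → ℝ) (γ z : ℝ)
    (hB : B.PosSemidef) (hγ : 0 ≤ γ) (hz : 0 < z) :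
    |(1 / n) * ((B + γ • vecMulVec u u + z • (1 : Matrix (Fin n) (Fin n) ℝ))⁻¹).trace -
      (1 / n) * ((B + z • (1 : Matrix (Fin n) (Fin n) ℝ))⁻¹).trace| ≤ 1 / (n * z) := by
  rw [← mul_sub, abs_mul, abs_of_nonneg (by positivity), ← one_div_mul_one_div]
  exact mul_le_mul_of_nonneg_left (hB.abs_trace_inv_add_smul_vecMulVec_sub_le u hγ hz)
    (by positivity)
end

section
/- The fixed-point system δ₁ = (1/c)·ν(1+δ₁)/(ν + z(1+δ₁)(1+δ₂)), δ₂ = ν(1+δ₂)/(ν + z(1+δ₁)(1+δ₂)) with parameters ν > 0, c > 0, z > 0 admits a unique pair of nonnegative solutions (δ₁, δ₂), provided z is large enough (e.g., z > ν(1 + 1/c)). -/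
/-!
Put `s = ν / (ν + z (1 + δ₁) (1 + δ₂))`. The two equations say exactly `δ₁ = s / (c - s)` and
`δ₂ = s / (1 - s)`, and substituting these back into the definition of `s` leaves the scalar
equation `ν (1 - s)² (c - s) = z c s` on `0 < s < min 1 c`. Its left side minus its right side
is positive at `0`, negative at `min 1 c` and strictly decreasing in between, so it has exactly
one root there, which gives exactly one nonnegative solution.
-/

open Set

namespace FixedPointSystem

variable {ν c z : ℝ}

def IsNonnegSolution (ν c z : ℝ) (d : ℝ × ℝ) : Prop :=
  0 ≤ d.1 ∧ 0 ≤ d.2 ∧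
    d.1 = (1 / c) * (ν * (1 + d.1) / (ν + z * (1 + d.1) * (1 + d.2))) ∧
    d.2 = ν * (1 + d.2) / (ν + z * (1 + d.1) * (1 + d.2))

def defect (ν c z t : ℝ) : ℝ := ν * (1 - t) ^ 2 * (c - t) - z * c * t

noncomputable def ofRoot (c t : ℝ) : ℝ × ℝ := (t / (c - t), t / (1 - t))

lemma strictAntiOn_defect (hν : 0 ≤ ν) (hzc : 0 < z * c) :
    StrictAntiOn (defect ν c z) (Iic (min 1 c)) := by
  intro s hs t ht hst
  have hs1 : s ≤ 1 := hs.trans (min_le_left _ _)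
  have ht1 : t ≤ 1 := ht.trans (min_le_left _ _)
  have htc : t ≤ c := ht.trans (min_le_right _ _)
  have hsq : (1 - t) ^ 2 ≤ (1 - s) ^ 2 := pow_le_pow_left₀ (by linarith) (by linarith) 2
  have hprod : (1 - t) ^ 2 * (c - t) ≤ (1 - s) ^ 2 * (c - s) :=
    mul_le_mul hsq (by linarith) (by linarith) (sq_nonneg _)
  unfold defect
  nlinarith [mul_le_mul_of_nonneg_left hprod hν, mul_lt_mul_of_pos_left hst hzc]

lemma exists_defect_eq_zero (hν : 0 < ν) (hc : 0 < c) (hz : 0 < z) :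
    ∃ t ∈ Ioo 0 (min 1 c), defect ν c z t = 0 := by
  have hm : 0 < min 1 c := lt_min one_pos hc
  have hcont : ContinuousOn (defect ν c z) (Icc 0 (min 1 c)) := by
    unfold defect; fun_prop
  have hend : defect ν c z (min 1 c) < 0 := by
    have : (1 - min 1 c) ^ 2 * (c - min 1 c) = 0 := by
      rcases min_choice 1 c with h | h <;> simp [h]
    simp only [defect, mul_assoc, this, mul_zero, zero_sub, neg_neg_iff_pos]
    positivity
  have hstart : 0 < defect ν c z 0 := by simp only [defect]; norm_num; positivity
  exact intermediate_value_Ioo' hm.le hcont ⟨hend, hstart⟩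

lemma isNonnegSolution_ofRoot (hν : 0 < ν) {t : ℝ} (ht : t ∈ Ioo 0 (min 1 c))
    (hdef : defect ν c z t = 0) : IsNonnegSolution ν c z (ofRoot c t) := by
  obtain ⟨ht0, ht⟩ := ht
  have h1t : 0 < 1 - t := sub_pos.2 (ht.trans_le (min_le_left _ _))
  have hct : 0 < c - t := sub_pos.2 (ht.trans_le (min_le_right _ _))
  have hc : c ≠ 0 := by linarith
  have hD : ν + z * (1 + t / (c - t)) * (1 + t / (1 - t)) = ν / t := by
    unfold defect at hdef
    field_simp
    linear_combination -hdef
  refine ⟨(div_pos ht0 hct).le, (div_pos ht0 h1t).le, ?_⟩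
  simp only [ofRoot, hD]
  constructor <;> field_simp <;> ring

lemma exists_eq_ofRoot_of_isNonnegSolution (hν : 0 < ν) (hc : 0 < c) (hz : 0 < z) {d : ℝ × ℝ}
    (hd : IsNonnegSolution ν c z d) :
    ∃ s ∈ Ioo 0 (min 1 c), defect ν c z s = 0 ∧ d = ofRoot c s := by
  obtain ⟨a, b⟩ := d
  obtain ⟨ha, hb, e₁, e₂⟩ := hd
  set D := ν + z * (1 + a) * (1 + b) with hD
  have hD0 : 0 < D := by positivity
  set s := ν / D with hs
  rw [mul_div_assoc', one_div_mul_eq_div, div_div] at e₁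
  have e₁' : a * (c * D) = ν * (1 + a) := by rwa [eq_div_iff (by positivity)] at e₁
  have e₂' : b * D = ν * (1 + b) := by rwa [eq_div_iff hD0.ne'] at e₂
  have h1s : (1 - s) * (1 + b) = 1 := by
    rw [hs]; field_simp; linear_combination e₂'
  have hcs : (c - s) * (1 + a) = c := by
    rw [hs]; field_simp; linear_combination e₁'
  have h1s0 : 0 < 1 - s := pos_of_mul_pos_left (h1s ▸ one_pos) (by linarith)
  have hcs0 : 0 < c - s := pos_of_mul_pos_left (hcs ▸ hc) (by linarith)
  refine ⟨s, ⟨div_pos hν hD0, lt_min (by linarith) (by linarith)⟩, ?_, ?_⟩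
  · have hsD : s * D = ν := div_mul_cancel₀ ν hD0.ne'
    have key : z * s * (1 + a) * (1 + b) ^ 2 = ν := by
      linear_combination (1 + b) * hsD + ν * h1s - s * (1 + b) * hD
    have : defect ν c z s * ((1 + b) ^ 2 * (1 + a)) = 0 := by
      unfold defect
      linear_combination
        ν * ((1 - s) * (1 + b) + 1) * ((c - s) * (1 + a)) * h1s + ν * hcs - c * key
    exact (mul_eq_zero.1 this).resolve_right (by positivity)
  · rw [ofRoot, Prod.mk.injEq, eq_div_iff hcs0.ne', eq_div_iff h1s0.ne']
    constructor <;> linarith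

end FixedPointSystem

open FixedPointSystem

theorem fixed_point_system_unique_general (ν c z : ℝ)
    (hν : 0 < ν) (hc : 0 < c) (hz : 0 < z) :
    ∃! d : ℝ × ℝ, 0 ≤ d.1 ∧ 0 ≤ d.2 ∧
      d.1 = (1 / c) * (ν * (1 + d.1) / (ν + z * (1 + d.1) * (1 + d.2))) ∧
      d.2 = ν * (1 + d.2) / (ν + z * (1 + d.1) * (1 + d.2)) := by
  obtain ⟨t, ht, hdef⟩ := exists_defect_eq_zero hν hc hz
  refine ⟨ofRoot c t, isNonnegSolution_ofRoot hν ht hdef, fun d hd => ?_⟩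
  obtain ⟨s, hs, hdef', rfl⟩ := exists_eq_ofRoot_of_isNonnegSolution hν hc hz hd
  have hst : s = t := (strictAntiOn_defect hν.le (mul_pos hz hc)).injOn hs.2.le ht.2.le
    (hdef'.trans hdef.symm)
  rw [hst]

/-- Existence and uniqueness of nonnegative solutions to the fixed point system
for `z` large enough. -/
theorem fixed_point_system_unique (ν c z : ℝ)
    (hν : 0 < ν) (hc : 0 < c) (hz : 0 < z) (hlarge : z > ν * (1 + 1 / c)) :
    ∃! d : ℝ × ℝ, 0 ≤ d.1 ∧ 0 ≤ d.2 ∧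
      d.1 = (1 / c) * (ν * (1 + d.1) / (ν + z * (1 + d.1) * (1 + d.2))) ∧
      d.2 = ν * (1 + d.2) / (ν + z * (1 + d.1) * (1 + d.2)) :=
  fixed_point_system_unique_general ν c z hν hc hz
end
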